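/- arXiv:2409.05518 — 4 statements merged into one kernel-verified Lean document; each statement's English description precedes it below -/
import Mathlib

section
/- In the nested logit model, the own-derivative of the choice probability with respect to its own utility is ∂p_y/∂v_y = p_y [ (1/λ_m)(1 - p_{y|m}) + p_{y|m} (1 - p_y) ] when grouped appropriately, i.e., ∂p_y/∂v_y = p_y[(1/λ_m) - ((1-λ_m)/λ_m) p_{y|m} - p_y], and this quantity is strictly positive. -/
open Real Finset

/-- Sum of exponentiated scaled utilities within nest `k`. -/
noncomputable def nestSum {n K : ℕ} (nest : Fin n → Fin K) (lam : Fin K → ℝ)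
    (v : Fin n → ℝ) (k : Fin K) : ℝ :=
  ∑ j ∈ Finset.univ.filter (fun j => nest j = k), Real.exp (v j / lam k)

/-- Within-nest conditional choice probability `p_{y|m}` for `y` in nest `m = nest y`. -/
noncomputable def nlCond {n K : ℕ} (nest : Fin n → Fin K) (lam : Fin K → ℝ)
    (v : Fin n → ℝ) (y : Fin n) : ℝ :=
  Real.exp (v y / lam (nest y)) / nestSum nest lam v (nest y)

/-- Nested logit choice probability
`p_y(v) = exp(v_y/λ_m) [∑_{j∈B_m} exp(v_j/λ_m)]^{λ_m-1} / (1 + ∑_k I_k)`,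
where `I_k = [∑_{j∈B_k} exp(v_j/λ_k)]^{λ_k}` and the outside option (utility 0)
is in its own nest. -/
noncomputable def nlP {n K : ℕ} (nest : Fin n → Fin K) (lam : Fin K → ℝ)
    (v : Fin n → ℝ) (y : Fin n) : ℝ :=
  Real.exp (v y / lam (nest y)) * (nestSum nest lam v (nest y)) ^ (lam (nest y) - 1)
    / (1 + ∑ k, (nestSum nest lam v k) ^ (lam k))

/-- Nested logit outside-option probability. -/
noncomputable def nlP0 {n K : ℕ} (nest : Fin n → Fin K) (lam : Fin K → ℝ)
    (v : Fin n → ℝ) : ℝ :=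
  1 / (1 + ∑ k, (nestSum nest lam v k) ^ (lam k))


lemma nl_key (lm C R t : ℝ) (hl0 : 0 < lm) (hl1 : lm ≤ 1) (hC : 0 ≤ C) (hR : 0 ≤ R) :
    HasDerivAt (fun s => Real.exp (s / lm) * (Real.exp (s / lm) + C) ^ (lm - 1)
        / (1 + ((Real.exp (s / lm) + C) ^ lm + R)))
      (Real.exp (t / lm) * (Real.exp (t / lm) + C) ^ (lm - 1)
        / (1 + ((Real.exp (t / lm) + C) ^ lm + R)) *
        (1 / lm - (1 - lm) / lm * (Real.exp (t / lm) / (Real.exp (t / lm) + C))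
          - Real.exp (t / lm) * (Real.exp (t / lm) + C) ^ (lm - 1)
            / (1 + ((Real.exp (t / lm) + C) ^ lm + R)))) t ∧
    0 < Real.exp (t / lm) * (Real.exp (t / lm) + C) ^ (lm - 1)
        / (1 + ((Real.exp (t / lm) + C) ^ lm + R)) *
        (1 / lm - (1 - lm) / lm * (Real.exp (t / lm) / (Real.exp (t / lm) + C))
          - Real.exp (t / lm) * (Real.exp (t / lm) + C) ^ (lm - 1)
            / (1 + ((Real.exp (t / lm) + C) ^ lm + R))) := by
  have hE : 0 < Real.exp (t / lm) := Real.exp_pos _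
  have hS : 0 < Real.exp (t / lm) + C := by linarith
  have hB : 0 < (Real.exp (t / lm) + C) ^ lm := Real.rpow_pos_of_pos hS _
  have hA : 0 < (Real.exp (t / lm) + C) ^ (lm - 1) := Real.rpow_pos_of_pos hS _
  have hD : 0 < 1 + ((Real.exp (t / lm) + C) ^ lm + R) := by linarith
  have h1 : HasDerivAt (fun s => Real.exp (s / lm)) (Real.exp (t / lm) / lm) t := by
    simpa [div_eq_mul_inv] using ((hasDerivAt_id t).div_const lm).exp
  have h2 : HasDerivAt (fun s => Real.exp (s / lm) + C) (Real.exp (t / lm) / lm) t :=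
    h1.add_const C
  have h3 : HasDerivAt (fun s => (Real.exp (s / lm) + C) ^ (lm - 1))
      (Real.exp (t / lm) / lm * (lm - 1) * (Real.exp (t / lm) + C) ^ (lm - 1 - 1)) t :=
    h2.rpow_const (Or.inl hS.ne')
  have h5 : HasDerivAt (fun s => 1 + ((Real.exp (s / lm) + C) ^ lm + R))
      (Real.exp (t / lm) / lm * lm * (Real.exp (t / lm) + C) ^ (lm - 1)) t :=
    ((h2.rpow_const (Or.inl hS.ne')).add_const R).const_add 1
  have h6 := (h1.mul h3).div h5 hD.ne'
  have h7 : (Real.exp (t / lm) + C) ^ (lm - 1 - 1)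
      = (Real.exp (t / lm) + C) ^ (lm - 1) / (Real.exp (t / lm) + C) :=
    Real.rpow_sub_one hS.ne' _
  have h8 : (Real.exp (t / lm) + C) ^ lm
      = (Real.exp (t / lm) + C) ^ (lm - 1) * (Real.exp (t / lm) + C) := by
    rw [Real.rpow_sub_one hS.ne']
    field_simp
  constructor
  · refine h6.congr_deriv ?_
    simp only [Pi.mul_apply]
    rw [h7, h8]
    field_simp
    ring
  · have hp0 : 0 < Real.exp (t / lm) * (Real.exp (t / lm) + C) ^ (lm - 1)
        / (1 + ((Real.exp (t / lm) + C) ^ lm + R)) := by positivity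
    have hp1 : Real.exp (t / lm) * (Real.exp (t / lm) + C) ^ (lm - 1)
        / (1 + ((Real.exp (t / lm) + C) ^ lm + R)) < 1 := by
      rw [div_lt_one hD, h8]
      nlinarith
    have hq1 : Real.exp (t / lm) / (Real.exp (t / lm) + C) ≤ 1 := by
      rw [div_le_one hS]; linarith
    have hq0 : 0 < Real.exp (t / lm) / (Real.exp (t / lm) + C) := by positivity
    have hfac : 1 - lm ≥ 0 := by linarith
    have h9 : (1 - lm) / lm * (Real.exp (t / lm) / (Real.exp (t / lm) + C)) ≤ (1 - lm) / lm := by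
      nlinarith [div_nonneg hfac hl0.le]
    have h10 : 1 / lm - (1 - lm) / lm = 1 := by field_simp; ring
    apply mul_pos hp0
    nlinarith

/-- In the nested logit model, the own-derivative of the choice probability is
`∂p_y/∂v_y = p_y[(1/λ_m) - ((1-λ_m)/λ_m) p_{y|m} - p_y]`, and it is strictly
positive. -/
theorem nested_logit_own_derivative_pos {n K : ℕ}
    (nest : Fin n → Fin K) (lam : Fin K → ℝ)
    (hlam : ∀ k, 0 < lam k ∧ lam k ≤ 1) (v : Fin n → ℝ) (y : Fin n) :
    HasDerivAt (fun t => nlP nest lam (Function.update v y t) y)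
      (nlP nest lam v y *
        (1 / lam (nest y) - (1 - lam (nest y)) / lam (nest y) * nlCond nest lam v y
          - nlP nest lam v y)) (v y) ∧
    0 < nlP nest lam v y *
        (1 / lam (nest y) - (1 - lam (nest y)) / lam (nest y) * nlCond nest lam v y
          - nlP nest lam v y) := by
  obtain ⟨hl0, hl1⟩ := hlam (nest y)
  set m := nest y with hm
  have hy : y ∈ Finset.univ.filter (fun j => nest j = m) := by simp [hm]
  set C : ℝ := ∑ j ∈ (Finset.univ.filter (fun j => nest j = m)).erase y,
      Real.exp (v j / lam m) with hCdef
  have hC0 : 0 ≤ C := Finset.sum_nonneg fun j _ => (Real.exp_pos _).le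
  have hSt : ∀ t, nestSum nest lam (Function.update v y t) m = Real.exp (t / lam m) + C := by
    intro t
    rw [nestSum, ← Finset.add_sum_erase _ _ hy]
    congr 1
    · simp
    · exact Finset.sum_congr rfl fun j hj => by
        rw [Function.update_of_ne (Finset.ne_of_mem_erase hj)]
  have hSk : ∀ k, k ≠ m → ∀ t,
      nestSum nest lam (Function.update v y t) k = nestSum nest lam v k := by
    intro k hk t
    refine Finset.sum_congr rfl fun j hj => ?_
    simp only [Finset.mem_filter] at hj
    rw [Function.update_of_ne]
    intro hjy
    exact hk (hm.trans (by rw [hjy] at hj; exact hj.2)).symm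
  set R : ℝ := ∑ k ∈ Finset.univ.erase m, (nestSum nest lam v k) ^ (lam k) with hRdef
  have hR0 : 0 ≤ R :=
    Finset.sum_nonneg fun k _ =>
      Real.rpow_nonneg (Finset.sum_nonneg fun j _ => (Real.exp_pos _).le) _
  have hDen : ∀ t, ∑ k, (nestSum nest lam (Function.update v y t) k) ^ (lam k)
      = (Real.exp (t / lam m) + C) ^ (lam m) + R := by
    intro t
    rw [← Finset.add_sum_erase _ _ (Finset.mem_univ m), hSt]
    congr 1
    exact Finset.sum_congr rfl fun k hk => by rw [hSk k (Finset.ne_of_mem_erase hk)]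
  have hvupd : Function.update v y (v y) = v := Function.update_eq_self _ _
  have hfun : (fun t => nlP nest lam (Function.update v y t) y)
      = fun t => Real.exp (t / lam m) * (Real.exp (t / lam m) + C) ^ (lam m - 1)
          / (1 + ((Real.exp (t / lam m) + C) ^ (lam m) + R)) := by
    funext t
    rw [nlP, ← hm, Function.update_self, hSt, hDen]
  have hNest : nestSum nest lam v m = Real.exp (v y / lam m) + C := by
    have := hSt (v y); rwa [hvupd] at this
  have hDenv : ∑ k, (nestSum nest lam v k) ^ (lam k)
      = (Real.exp (v y / lam m) + C) ^ (lam m) + R := by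
    have := hDen (v y); rwa [hvupd] at this
  have hP : nlP nest lam v y = Real.exp (v y / lam m) * (Real.exp (v y / lam m) + C) ^ (lam m - 1)
      / (1 + ((Real.exp (v y / lam m) + C) ^ (lam m) + R)) := by
    rw [nlP, ← hm, hNest, hDenv]
  have hQ : nlCond nest lam v y = Real.exp (v y / lam m) / (Real.exp (v y / lam m) + C) := by
    rw [nlCond, ← hm, hNest]
  have key := nl_key (lam m) C R (v y) hl0 hl1 hC0 hR0
  rw [hfun, hP, hQ]
  exact key
end

section
/- For n = m = 1 (one worker type and one firm type with logit demand and supply), the scalar map f(w) = w + (σ^Xσ^Y/(σ^X+σ^Y)) log[ n^Y e^{(β^Y - w)/σ^Y} (1 + e^{(β^X+w)/σ^X}) / (n^X e^{(β^X+w)/σ^X} (1 + e^{(β^Y-w)/σ^Y})) ] is a contraction on ℝ and has a unique fixed point w*, which is the unique solution of n^X p^X(w) = n^Y p^Y(w) with p^X(w) = e^{(β^X+w)/σ^X}/(1+e^{(β^X+w)/σ^X}) and p^Y(w) = e^{(β^Y-w)/σ^Y}/(1+e^{(β^Y-w)/σ^Y}). -/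
open Real

/-- Worker's logit supply probability `p^X(w) = e^{(β^X+w)/σ^X}/(1+e^{(β^X+w)/σ^X})`. -/
noncomputable def pXs (βX σX w : ℝ) : ℝ :=
  Real.exp ((βX + w) / σX) / (1 + Real.exp ((βX + w) / σX))

/-- Firm's logit demand probability `p^Y(w) = e^{(β^Y-w)/σ^Y}/(1+e^{(β^Y-w)/σ^Y})`. -/
noncomputable def pYs (βY σY w : ℝ) : ℝ :=
  Real.exp ((βY - w) / σY) / (1 + Real.exp ((βY - w) / σY))

/-- Scalar wage-updating map for one worker type and one firm type. -/
noncomputable def fScalar (βX βY σX σY nX nY w : ℝ) : ℝ :=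
  w + σX * σY / (σX + σY) *
    Real.log (nY * Real.exp ((βY - w) / σY) * (1 + Real.exp ((βX + w) / σX)) /
      (nX * Real.exp ((βX + w) / σX) * (1 + Real.exp ((βY - w) / σY))))

/-- Logistic sigmoid. -/
noncomputable def sig (x : ℝ) : ℝ := Real.exp x / (1 + Real.exp x)

lemma one_add_exp_pos (x : ℝ) : (0:ℝ) < 1 + Real.exp x := by positivity

lemma sig_pos (x : ℝ) : 0 < sig x := by
  unfold sig; positivity

lemma sig_lt_one (x : ℝ) : sig x < 1 := by
  unfold sig
  rw [div_lt_one (one_add_exp_pos x)]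
  linarith

lemma sig_mono : Monotone sig := by
  intro a b hab
  unfold sig
  have ha := Real.exp_pos a
  have hb := Real.exp_pos b
  rw [div_le_div_iff₀ (one_add_exp_pos a) (one_add_exp_pos b)]
  have : Real.exp a ≤ Real.exp b := Real.exp_le_exp.mpr hab
  nlinarith

lemma hasDerivAt_log_one_add_exp (x : ℝ) :
    HasDerivAt (fun y => Real.log (1 + Real.exp y)) (sig x) x := by
  have h1 : HasDerivAt (fun y => 1 + Real.exp y) (Real.exp x) x :=
    (Real.hasDerivAt_exp x).const_add 1
  have := h1.log (ne_of_gt (one_add_exp_pos x))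
  simpa [sig] using this

section main

variable (βX βY σX σY nX nY : ℝ)

/-- Rewriting `fScalar` in additive form. -/
lemma fScalar_eq (hσX : 0 < σX) (hσY : 0 < σY) (hnX : 0 < nX) (hnY : 0 < nY) (w : ℝ) :
    fScalar βX βY σX σY nX nY w = w + σX * σY / (σX + σY) *
      (Real.log nY - Real.log nX + (βY - w) / σY - (βX + w) / σX
        + Real.log (1 + Real.exp ((βX + w) / σX))
        - Real.log (1 + Real.exp ((βY - w) / σY))) := by
  have hx := Real.exp_pos ((βX + w) / σX)
  have hy := Real.exp_pos ((βY - w) / σY)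
  have h1 := one_add_exp_pos ((βX + w) / σX)
  have h2 := one_add_exp_pos ((βY - w) / σY)
  unfold fScalar
  rw [Real.log_div (by positivity) (by positivity),
      Real.log_mul (by positivity) (by positivity),
      Real.log_mul (by positivity) (by positivity),
      Real.log_mul (by positivity) (by positivity),
      Real.log_mul (by positivity) (by positivity),
      Real.log_exp, Real.log_exp]
  ring

/-- Derivative of `fScalar`. -/
lemma fScalar_hasDerivAt (hσX : 0 < σX) (hσY : 0 < σY) (hnX : 0 < nX) (hnY : 0 < nY) (w : ℝ) :
    HasDerivAt (fScalar βX βY σX σY nX nY)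
      (σX * σY / (σX + σY) * (sig ((βX + w) / σX) / σX + sig ((βY - w) / σY) / σY)) w := by
  have hS : σX + σY ≠ 0 := by positivity
  have ha : HasDerivAt (fun w : ℝ => (βX + w) / σX) (1 / σX) w := by
    simpa using ((hasDerivAt_id w).const_add βX).div_const σX
  have hb : HasDerivAt (fun w : ℝ => (βY - w) / σY) (-1 / σY) w := by
    have : HasDerivAt (fun w : ℝ => βY - w) (-1) w := by
      simpa using (hasDerivAt_id w).const_sub βY
    simpa using this.div_const σY
  have hla : HasDerivAt (fun w : ℝ => Real.log (1 + Real.exp ((βX + w) / σX)))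
      (sig ((βX + w) / σX) * (1 / σX)) w :=
    by have := (hasDerivAt_log_one_add_exp ((βX + w) / σX)).comp w ha; exact this
  have hlb : HasDerivAt (fun w : ℝ => Real.log (1 + Real.exp ((βY - w) / σY)))
      (sig ((βY - w) / σY) * (-1 / σY)) w :=
    by have := (hasDerivAt_log_one_add_exp ((βY - w) / σY)).comp w hb; exact this
  have hinner : HasDerivAt (fun w : ℝ =>
      Real.log nY - Real.log nX + (βY - w) / σY - (βX + w) / σX
        + Real.log (1 + Real.exp ((βX + w) / σX))
        - Real.log (1 + Real.exp ((βY - w) / σY)))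
      (-1 / σY - 1 / σX + sig ((βX + w) / σX) * (1 / σX)
        - sig ((βY - w) / σY) * (-1 / σY)) w := by
    exact ((((hb.const_add (Real.log nY - Real.log nX)).sub ha).add hla).sub hlb)
  have hf : HasDerivAt (fun w : ℝ => w + σX * σY / (σX + σY) *
      (Real.log nY - Real.log nX + (βY - w) / σY - (βX + w) / σX
        + Real.log (1 + Real.exp ((βX + w) / σX))
        - Real.log (1 + Real.exp ((βY - w) / σY))))
      (1 + σX * σY / (σX + σY) * (-1 / σY - 1 / σX + sig ((βX + w) / σX) * (1 / σX)
        - sig ((βY - w) / σY) * (-1 / σY))) w :=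
    (hasDerivAt_id w).add (hinner.const_mul _)
  have heq : (fun w : ℝ => w + σX * σY / (σX + σY) *
      (Real.log nY - Real.log nX + (βY - w) / σY - (βX + w) / σX
        + Real.log (1 + Real.exp ((βX + w) / σX))
        - Real.log (1 + Real.exp ((βY - w) / σY)))) = fScalar βX βY σX σY nX nY := by
    funext v
    exact (fScalar_eq βX βY σX σY nX nY hσX hσY hnX hnY v).symm
  rw [heq] at hf
  convert hf using 1
  field_simp
  ring

theorem scalar_logit_wage_map_contraction_aux : True := trivial

end main

/-- For one worker type and one firm type with logit supply and demand, the
scalar wage-updating map is a contraction on `ℝ` with a unique fixed point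
`w*`, which is the unique solution of `n^X p^X(w) = n^Y p^Y(w)`. -/
theorem scalar_logit_wage_map_contraction (βX βY σX σY nX nY : ℝ)
    (hσX : 0 < σX) (hσY : 0 < σY) (hnX : 0 < nX) (hnY : 0 < nY) :
    (∃ L : ℝ, 0 ≤ L ∧ L < 1 ∧ ∀ w₁ w₀ : ℝ,
      |fScalar βX βY σX σY nX nY w₁ - fScalar βX βY σX σY nX nY w₀| ≤ L * |w₁ - w₀|) ∧
    (∃! ws : ℝ, fScalar βX βY σX σY nX nY ws = ws) ∧
    (∀ w : ℝ, fScalar βX βY σX σY nX nY w = w ↔ nX * pXs βX σX w = nY * pYs βY σY w) := by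
  have hS : (0:ℝ) < σX + σY := by positivity
  set M : ℝ := (βX + βY) / (σX + σY) with hM
  set L : ℝ := 1 - min σX σY * (1 - sig M) / (σX + σY) with hL
  have hsM1 : sig M < 1 := sig_lt_one M
  have hmin : 0 < min σX σY := lt_min hσX hσY
  have hminXY : min σX σY ≤ σX + σY := le_trans (min_le_left _ _) (by linarith)
  have hL0 : 0 ≤ L := by
    rw [hL]
    rw [sub_nonneg, div_le_one hS]
    nlinarith [sig_pos M]
  have hL1 : L < 1 := by
    rw [hL]
    have : 0 < min σX σY * (1 - sig M) / (σX + σY) :=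
      div_pos (mul_pos hmin (by linarith)) hS
    linarith
  -- derivative bounds
  set d : ℝ → ℝ := fun w =>
    σX * σY / (σX + σY) * (sig ((βX + w) / σX) / σX + sig ((βY - w) / σY) / σY) with hd
  have hd_nonneg : ∀ w, 0 ≤ d w := by
    intro w
    have := (sig_pos ((βX + w) / σX)).le
    have := (sig_pos ((βY - w) / σY)).le
    rw [hd]
    positivity
  have hd_le : ∀ w, d w ≤ L := by
    intro w
    set a : ℝ := (βX + w) / σX with haa
    set b : ℝ := (βY - w) / σY with hbb
    have key : σX * a + σY * b = (σX + σY) * M := by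
      rw [haa, hbb, hM]; field_simp; try ring
    have hcase : a ≤ M ∨ b ≤ M := by
      by_contra h
      push_neg at h
      nlinarith [h.1, h.2]
    have hde : d w = (σY * sig a + σX * sig b) / (σX + σY) := by
      rw [hd]
      field_simp
      try ring
    have hLe : L = ((σX + σY) - min σX σY * (1 - sig M)) / (σX + σY) := by
      rw [hL]; field_simp
    rw [hde, hLe, div_le_div_iff_of_pos_right hS]
    have hsa1 : sig a < 1 := sig_lt_one a
    have hsb1 : sig b < 1 := sig_lt_one b
    rcases hcase with h | h
    · have : sig a ≤ sig M := sig_mono h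
      have h1 : min σX σY ≤ σY := min_le_right _ _
      nlinarith [sig_pos a, sig_pos b]
    · have : sig b ≤ sig M := sig_mono h
      have h1 : min σX σY ≤ σX := min_le_left _ _
      nlinarith [sig_pos a, sig_pos b]
  -- Lipschitz
  have hderiv := fScalar_hasDerivAt βX βY σX σY nX nY hσX hσY hnX hnY
  have hlip : LipschitzWith L.toNNReal (fScalar βX βY σX σY nX nY) := by
    rw [← lipschitzOnWith_univ]
    apply Convex.lipschitzOnWith_of_nnnorm_hasDerivWithin_le (f' := d) convex_univ
    · intro x _
      exact (hderiv x).hasDerivWithinAt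
    · intro x _
      rw [← NNReal.coe_le_coe]
      rw [coe_nnnorm, Real.coe_toNNReal _ hL0, Real.norm_eq_abs,
        abs_of_nonneg (hd_nonneg x)]
      exact hd_le x
  have hcontr : ContractingWith L.toNNReal (fScalar βX βY σX σY nX nY) := by
    refine ⟨?_, hlip⟩
    rw [← NNReal.coe_lt_coe, Real.coe_toNNReal _ hL0]
    exact hL1
  refine ⟨⟨L, hL0, hL1, ?_⟩, ?_, ?_⟩
  · intro w₁ w₀
    have := hlip.dist_le_mul w₁ w₀
    rwa [Real.dist_eq, Real.dist_eq, Real.coe_toNNReal _ hL0] at this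
  · exact ⟨hcontr.fixedPoint _, hcontr.fixedPoint_isFixedPt,
      fun y hy => hcontr.fixedPoint_unique hy⟩
  · intro w
    have hx := Real.exp_pos ((βX + w) / σX)
    have hy := Real.exp_pos ((βY - w) / σY)
    have h1 := one_add_exp_pos ((βX + w) / σX)
    have h2 := one_add_exp_pos ((βY - w) / σY)
    set eX : ℝ := Real.exp ((βX + w) / σX)
    set eY : ℝ := Real.exp ((βY - w) / σY)
    have hden : nX * eX * (1 + eY) ≠ 0 := by positivity
    have hc : σX * σY / (σX + σY) ≠ 0 := by positivity
    unfold fScalar pXs pYs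
    have key : (nX * (eX / (1 + eX)) = nY * (eY / (1 + eY))) ↔
        nX * eX * (1 + eY) = nY * eY * (1 + eX) := by
      rw [← mul_div_assoc, ← mul_div_assoc, div_eq_div_iff h1.ne' h2.ne']
    constructor
    · intro h
      have hlog : Real.log (nY * eY * (1 + eX) / (nX * eX * (1 + eY))) = 0 := by
        have h' : σX * σY / (σX + σY) *
            Real.log (nY * eY * (1 + eX) / (nX * eX * (1 + eY))) = 0 := by linarith
        exact (mul_eq_zero.mp h').resolve_left hc
      have hRpos : (0:ℝ) < nY * eY * (1 + eX) / (nX * eX * (1 + eY)) := by positivity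
      have hR1 : nY * eY * (1 + eX) / (nX * eX * (1 + eY)) = 1 := by
        rcases Real.log_eq_zero.mp hlog with h0 | h0 | h0
        · linarith
        · exact h0
        · linarith
      exact key.mpr ((div_eq_one_iff_eq hden).mp hR1).symm
    · intro h
      have heq : nY * eY * (1 + eX) = nX * eX * (1 + eY) := (key.mp h).symm
      rw [(div_eq_one_iff_eq hden).mpr heq, Real.log_one]
      ring
end

section
/- Suppose for each (x,y) the Jacobian entries of the map F satisfy ∇_{w_{ij}} F_{xy}(W) = α_{xy} 1(i=x) a^{xy}_j(W) + (1-α_{xy}) 1(j=y) b^{xy}_i(W), where α_{xy} ∈ (0,1), a^{xy}_j(W) > 0 with Σ_{j=0}^m a^{xy}_j(W) = 1 and b^{xy}_i(W) > 0 with Σ_{i=0}^n b^{xy}_i(W) = 1 for all W. Then ‖∇F(W)‖_∞ = max_{x,y} {1 - α_{xy} a^{xy}_0(W) - (1-α_{xy}) b^{xy}_0(W)} < 1 for every W. -/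
open Finset

/-- Abstract contraction bound: if for each match `(x,y)` the Jacobian entries
of `F` have the structure
`∇_{w_{ij}} F_{xy}(W) = α_{xy} 1(i=x) a^{xy}_j(W) + (1-α_{xy}) 1(j=y) b^{xy}_i(W)`
with `α_{xy} ∈ (0,1)`, positive weights `a^{xy}` (indexed by `0,…,m`, outside
option at `0`) summing to one and positive weights `b^{xy}` (indexed by
`0,…,n`) summing to one, then
`‖∇F(W)‖_∞ = max_{x,y} {1 - α_{xy} a^{xy}_0(W) - (1-α_{xy}) b^{xy}_0(W)} < 1`. -/
theorem jacobian_row_structure_infty_norm_lt_one {n m : ℕ}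
    (J : (Fin n → Fin m → ℝ) → Fin n → Fin m → Fin n → Fin m → ℝ)
    (α : Fin n → Fin m → ℝ)
    (a : (Fin n → Fin m → ℝ) → Fin n → Fin m → Fin (m + 1) → ℝ)
    (b : (Fin n → Fin m → ℝ) → Fin n → Fin m → Fin (n + 1) → ℝ)
    (hα : ∀ x y, 0 < α x y ∧ α x y < 1)
    (ha : ∀ W x y j, 0 < a W x y j) (hb : ∀ W x y i, 0 < b W x y i)
    (hsa : ∀ W x y, ∑ j, a W x y j = 1) (hsb : ∀ W x y, ∑ i, b W x y i = 1)
    (hJ : ∀ W x y i j, J W x y i j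
      = α x y * (if i = x then a W x y j.succ else 0)
        + (1 - α x y) * (if j = y then b W x y i.succ else 0)) :
    ∀ W, (∀ x y, ∑ i, ∑ j, |J W x y i j|
        = 1 - α x y * a W x y 0 - (1 - α x y) * b W x y 0) ∧
      (⨆ x, ⨆ y, ∑ i, ∑ j, |J W x y i j|)
        = (⨆ x, ⨆ y, (1 - α x y * a W x y 0 - (1 - α x y) * b W x y 0)) ∧
      (⨆ x, ⨆ y, ∑ i, ∑ j, |J W x y i j|) < 1 := by
  intro W
  have hkey : ∀ x y, ∑ i, ∑ j, |J W x y i j|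
      = 1 - α x y * a W x y 0 - (1 - α x y) * b W x y 0 := by
    intro x y
    obtain ⟨hα0, hα1⟩ := hα x y
    have habs : ∀ i j, |J W x y i j| = J W x y i j := by
      intro i j
      rw [abs_of_nonneg]
      rw [hJ]
      apply add_nonneg <;> apply mul_nonneg
      · exact hα0.le
      · split_ifs; exacts [(ha W x y _).le, le_rfl]
      · linarith
      · split_ifs; exacts [(hb W x y _).le, le_rfl]
    simp only [habs]
    simp only [hJ, Finset.sum_add_distrib]
    have h1 : ∑ i : Fin n, ∑ j : Fin m, α x y * (if i = x then a W x y j.succ else 0)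
        = α x y * (1 - a W x y 0) := by
      have : ∑ j : Fin m, a W x y j.succ = 1 - a W x y 0 := by
        have := hsa W x y
        rw [Fin.sum_univ_succ] at this
        linarith
      simp [Finset.sum_ite_eq', mul_ite, ← Finset.mul_sum, this]
    have h2 : ∑ i : Fin n, ∑ j : Fin m, (1 - α x y) * (if j = y then b W x y i.succ else 0)
        = (1 - α x y) * (1 - b W x y 0) := by
      have hs : ∑ i : Fin n, b W x y i.succ = 1 - b W x y 0 := by
        have := hsb W x y
        rw [Fin.sum_univ_succ] at this
        linarith
      rw [Finset.sum_comm]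
      simp [Finset.sum_ite_eq', mul_ite, ← Finset.mul_sum, hs]
    rw [h1, h2]; ring
  have heq : (⨆ x, ⨆ y, ∑ i, ∑ j, |J W x y i j|)
      = (⨆ x, ⨆ y, (1 - α x y * a W x y 0 - (1 - α x y) * b W x y 0)) := by
    exact iSup_congr fun x => iSup_congr fun y => hkey x y
  refine ⟨hkey, heq, ?_⟩
  rw [heq]
  set t : Fin n → Fin m → ℝ := fun x y => 1 - α x y * a W x y 0 - (1 - α x y) * b W x y 0 with ht
  have htlt : ∀ x y, t x y < 1 := by
    intro x y
    obtain ⟨hα0, hα1⟩ := hα x y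
    have h1 := ha W x y 0
    have h2 := hb W x y 0
    have : 0 < α x y * a W x y 0 := mul_pos hα0 h1
    have : 0 < (1 - α x y) * b W x y 0 := mul_pos (by linarith) h2
    simp only [ht]
    linarith
  rcases Nat.eq_zero_or_pos n with hn | hn
  · subst hn
    haveI : IsEmpty (Fin 0) := inferInstance
    rw [Real.iSup_of_isEmpty]
    norm_num
  rcases Nat.eq_zero_or_pos m with hm | hm
  · subst hm
    haveI : IsEmpty (Fin 0) := inferInstance
    haveI : Nonempty (Fin n) := Fin.pos_iff_nonempty.mp hn
    have : ∀ x : Fin n, (⨆ y : Fin 0, t x y) = 0 := fun x => Real.iSup_of_isEmpty _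
    simp only [ht] at this ⊢; simp only [this]
    rw [ciSup_const]
    norm_num
  · haveI : Nonempty (Fin n) := Fin.pos_iff_nonempty.mp hn
    haveI : Nonempty (Fin m) := Fin.pos_iff_nonempty.mp hm
    have hne : (Finset.univ ×ˢ Finset.univ : Finset (Fin n × Fin m)).Nonempty := by
      simp [Finset.univ_nonempty]
    set c : ℝ := (Finset.univ ×ˢ Finset.univ : Finset (Fin n × Fin m)).sup'
      hne (fun p => t p.1 p.2) with hc
    have hle : (⨆ x, ⨆ y, t x y) ≤ c := by
      refine ciSup_le fun x => ciSup_le fun y => ?_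
      exact Finset.le_sup' (f := fun p : Fin n × Fin m => t p.1 p.2)
        (by simp : (x, y) ∈ (Finset.univ ×ˢ Finset.univ : Finset (Fin n × Fin m)))
    have hclt : c < 1 := by
      rw [hc, Finset.sup'_lt_iff]
      exact fun p _ => htlt p.1 p.2
    exact lt_of_le_of_lt hle hclt
end

section
/- If the stochastic payoffs are GEV with generating functions g^X, g^Y (homogeneous of degree 1) and the market-clearing condition n^X p^X_{xy} = n^Y p^Y_{xy} holds, then the equilibrium wage satisfies w*_{xy} = (σ^Xσ^Y/(σ^X+σ^Y)) [ log n^Y + β^Y_{xy}/σ^Y + log ∂_{e^Y_{xy}} g^Y(e^Y) - log g^Y(e^Y) - log n^X - β^X_{xy}/σ^X - log ∂_{e^X_{xy}} g^X(e^X) + log g^X(e^X) ], where e^X_{xj} = exp((β^X_{xj}+w*_{xj})/σ^X) and e^Y_{iy} = exp((β^Y_{iy}-w*_{iy})/σ^Y). -/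
/-! Taking logarithms turns market clearing into an equation that is affine in the wage:
`w / σX` enters the worker's side and `-w / σY` the firm's side, so it can be solved for `w`. -/

lemma log_mul_exp_mul_div {n t d g : ℝ} (hn : 0 < n) (hd : 0 < d) (hg : 0 < g) :
    Real.log (n * (Real.exp t * d / g)) = Real.log n + t + Real.log d - Real.log g := by
  rw [Real.log_mul hn.ne' (by positivity), Real.log_div (by positivity) hg.ne',
    Real.log_mul (Real.exp_pos t).ne' hd.ne', Real.log_exp]
  ring

lemma eq_of_add_add_div_eq_add_sub_div {σX σY a b c d w : ℝ} (hσX : 0 < σX) (hσY : 0 < σY)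
    (h : a + (b + w) / σX = c + (d - w) / σY) :
    w = σX * σY / (σX + σY) * (c + d / σY - a - b / σX) := by
  field_simp at h ⊢
  linarith

theorem gev_equilibrium_wage_equation_general {n m : ℕ}
    (gX : Fin n → (Fin (m + 1) → ℝ) → ℝ) (gY : Fin m → (Fin (n + 1) → ℝ) → ℝ)
    (βX βY : Fin n → Fin m → ℝ) (σX σY : ℝ) (hσX : 0 < σX) (hσY : 0 < σY)
    (nX : Fin n → ℝ) (nY : Fin m → ℝ) (hnX : ∀ x, 0 < nX x) (hnY : ∀ y, 0 < nY y)
    (W : Fin n → Fin m → ℝ)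
    -- exponentiated scaled payoffs, outside option (index 0) normalized to 1
    (eX : Fin n → Fin (m + 1) → ℝ) (eY : Fin m → Fin (n + 1) → ℝ)
    (heX : ∀ x, eX x = Fin.cons 1 (fun j => Real.exp ((βX x j + W x j) / σX)))
    (heY : ∀ y, eY y = Fin.cons 1 (fun i => Real.exp ((βY i y - W i y) / σY)))
    (hgXpos : ∀ x, 0 < gX x (eX x)) (hgYpos : ∀ y, 0 < gY y (eY y))
    (hdXpos : ∀ x (y : Fin m), 0 < fderiv ℝ (gX x) (eX x) (Pi.single y.succ 1))
    (hdYpos : ∀ y (x : Fin n), 0 < fderiv ℝ (gY y) (eY y) (Pi.single x.succ 1))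
    -- market clearing for the GEV choice probabilities
    (hmc : ∀ x y,
      nX x * (eX x y.succ * fderiv ℝ (gX x) (eX x) (Pi.single y.succ 1) / gX x (eX x))
        = nY y * (eY y x.succ * fderiv ℝ (gY y) (eY y) (Pi.single x.succ 1) / gY y (eY y))) :
    ∀ x y, W x y = σX * σY / (σX + σY) *
      (Real.log (nY y) + βY x y / σY
        + Real.log (fderiv ℝ (gY y) (eY y) (Pi.single x.succ 1))
        - Real.log (gY y (eY y))
        - Real.log (nX x) - βX x y / σX
        - Real.log (fderiv ℝ (gX x) (eX x) (Pi.single y.succ 1))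
        + Real.log (gX x (eX x))) := by
  intro x y
  have heX_succ : eX x y.succ = Real.exp ((βX x y + W x y) / σX) := by rw [heX, Fin.cons_succ]
  have heY_succ : eY y x.succ = Real.exp ((βY x y - W x y) / σY) := by rw [heY, Fin.cons_succ]
  have hlog := congrArg Real.log (hmc x y)
  rw [heX_succ, heY_succ, log_mul_exp_mul_div (hnX x) (hdXpos x y) (hgXpos x),
    log_mul_exp_mul_div (hnY y) (hdYpos y x) (hgYpos y)] at hlog
  set dX := fderiv ℝ (gX x) (eX x) (Pi.single y.succ 1)
  set dY := fderiv ℝ (gY y) (eY y) (Pi.single x.succ 1)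
  have hlinear : Real.log (nX x) + Real.log dX - Real.log (gX x (eX x)) + (βX x y + W x y) / σX
      = Real.log (nY y) + Real.log dY - Real.log (gY y (eY y)) + (βY x y - W x y) / σY := by
    linarith
  rw [eq_of_add_add_div_eq_add_sub_div hσX hσY hlinear]
  ring

/-- In the GEV matching model with degree-1 homogeneous generating functions
`g^X_x` (for worker types) and `g^Y_y` (for firm types), market clearing
`n^X_x p^X_{xy} = n^Y_y p^Y_{xy}` implies the equilibrium wage equation
`w*_{xy} = (σ^Xσ^Y/(σ^X+σ^Y)) [log n^Y_y + β^Y_{xy}/σ^Y + log ∂g^Y - log g^Y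
  - log n^X_x - β^X_{xy}/σ^X - log ∂g^X + log g^X]`,
where the worker's exponentiated scaled payoff vector is
`e^X_{x·} = (1, exp((β^X_{xj}+w_{xj})/σ^X))_j` (outside option at index 0) and
the firm's is `e^Y_{·y} = (1, exp((β^Y_{iy}-w_{iy})/σ^Y))_i`. -/
theorem gev_equilibrium_wage_equation {n m : ℕ}
    (gX : Fin n → (Fin (m + 1) → ℝ) → ℝ) (gY : Fin m → (Fin (n + 1) → ℝ) → ℝ)
    (hhomX : ∀ x (c : ℝ), 0 < c → ∀ e, gX x (c • e) = c * gX x e)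
    (hhomY : ∀ y (c : ℝ), 0 < c → ∀ e, gY y (c • e) = c * gY y e)
    (βX βY : Fin n → Fin m → ℝ) (σX σY : ℝ) (hσX : 0 < σX) (hσY : 0 < σY)
    (nX : Fin n → ℝ) (nY : Fin m → ℝ) (hnX : ∀ x, 0 < nX x) (hnY : ∀ y, 0 < nY y)
    (W : Fin n → Fin m → ℝ)
    -- exponentiated scaled payoffs, outside option (index 0) normalized to 1
    (eX : Fin n → Fin (m + 1) → ℝ) (eY : Fin m → Fin (n + 1) → ℝ)
    (heX : ∀ x, eX x = Fin.cons 1 (fun j => Real.exp ((βX x j + W x j) / σX)))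
    (heY : ∀ y, eY y = Fin.cons 1 (fun i => Real.exp ((βY i y - W i y) / σY)))
    (hgXpos : ∀ x, 0 < gX x (eX x)) (hgYpos : ∀ y, 0 < gY y (eY y))
    (hdXpos : ∀ x (y : Fin m), 0 < fderiv ℝ (gX x) (eX x) (Pi.single y.succ 1))
    (hdYpos : ∀ y (x : Fin n), 0 < fderiv ℝ (gY y) (eY y) (Pi.single x.succ 1))
    -- market clearing for the GEV choice probabilities
    (hmc : ∀ x y,
      nX x * (eX x y.succ * fderiv ℝ (gX x) (eX x) (Pi.single y.succ 1) / gX x (eX x))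
        = nY y * (eY y x.succ * fderiv ℝ (gY y) (eY y) (Pi.single x.succ 1) / gY y (eY y))) :
    ∀ x y, W x y = σX * σY / (σX + σY) *
      (Real.log (nY y) + βY x y / σY
        + Real.log (fderiv ℝ (gY y) (eY y) (Pi.single x.succ 1))
        - Real.log (gY y (eY y))
        - Real.log (nX x) - βX x y / σX
        - Real.log (fderiv ℝ (gX x) (eX x) (Pi.single y.succ 1))
        + Real.log (gX x (eX x))) :=
  gev_equilibrium_wage_equation_general gX gY βX βY σX σY hσX hσY nX nY hnX hnY W eX eY heX heY
    hgXpos hgYpos hdXpos hdYpos hmc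
end
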